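/- Suppose a nonnegative random variable model satisfies the one-point bound P(z ∈ H_ε) ≍ ε^s and the two-point bound P(w,z ∈ H_ε) ≤ c·min(ε^s, ε^{2s}/|w−z|^s), where H_ε is the ε-neighborhood of a random set H ⊆ ℂ. Then the upper bound holds: dim_H(H) ≤ 2 − s almost surely. -/

import Mathlib

open MeasureTheory Metric
open Filter Set
open scoped ENNReal NNReal Topology

/-!
Cover the disc of radius `R` by a grid of `O(r⁻²)` balls of radius `r`. The balls whose centres
lie in the `r`-neighbourhood of `H` cover `H ∩ closedBall 0 R` and have diameter at most `2r`, so
the `d`-dimensional cost of this cover is `(2r)^d` times their number, whose expectation is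
`O(r⁻² · r^s)` by the one-point bound. Along `r = ε₀ 2⁻ⁿ⁻¹` these expectations are summable as soon
as `d > 2 - s`, hence the costs tend to `0` almost surely and `μH[d] (H ∩ closedBall 0 R) = 0`.
Countably many rational `d` and integer `R` then give `dimH H ≤ 2 - s` almost surely.
-/

lemma Int.floor_div_mem_Icc_ceil {t R h : ℝ} (hh : 0 < h) (ht : |t| ≤ R) :
    ⌊t / h⌋ ∈ Finset.Icc (-⌈R / h⌉₊ : ℤ) ⌈R / h⌉₊ := by
  have hRh : |t / h| ≤ R / h := by rw [abs_div, abs_of_pos hh]; gcongr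
  have hceil : R / h ≤ ⌈R / h⌉₊ := Nat.le_ceil _
  rw [Finset.mem_Icc, Int.le_floor]
  constructor
  · push_cast; linarith [neg_abs_le (t / h)]
  · exact_mod_cast (Int.floor_le _).trans ((le_abs_self _).trans (hRh.trans hceil))

lemma exists_finset_closedBall_subset_biUnion_ball {R δ : ℝ} (hR : 0 ≤ R) (hδ : 0 < δ) :
    ∃ G : Finset ℂ, (G.card : ℝ) ≤ (4 * R / δ + 3) ^ 2 ∧
      closedBall (0 : ℂ) R ⊆ ⋃ z ∈ G, ball z δ := by
  set h := δ / 2 with h_def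
  have hh : 0 < h := half_pos hδ
  set N := ⌈R / h⌉₊
  set I := Finset.Icc (-N : ℤ) N
  refine ⟨(I ×ˢ I).image fun p => ⟨p.1 * h, p.2 * h⟩, ?_, ?_⟩
  · have hN : (N : ℝ) < 2 * R / δ + 1 := by
      have hRh : R / h = 2 * R / δ := by rw [h_def]; field_simp
      exact hRh ▸ Nat.ceil_lt_add_one (div_nonneg hR hh.le)
    have hI : (I.card : ℝ) ≤ 4 * R / δ + 3 := by
      rw [Int.card_Icc, show ((N : ℤ) + 1 - -N).toNat = 2 * N + 1 by omega]
      push_cast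
      linarith [mul_div_assoc 4 R δ, mul_div_assoc 2 R δ]
    calc (((I ×ˢ I).image _).card : ℝ) ≤ ((I ×ˢ I).card : ℝ) := by
          exact_mod_cast Finset.card_image_le
      _ = (I.card : ℝ) ^ 2 := by rw [Finset.card_product]; push_cast; ring
      _ ≤ _ := by gcongr
  · intro x hx
    have hx' : ‖x‖ ≤ R := by simpa using hx
    have hre := Int.floor_div_mem_Icc_ceil hh ((Complex.abs_re_le_norm x).trans hx')
    have him := Int.floor_div_mem_Icc_ceil hh ((Complex.abs_im_le_norm x).trans hx')
    refine mem_biUnion (Finset.mem_image_of_mem _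
      (show (⌊x.re / h⌋, ⌊x.im / h⌋) ∈ I ×ˢ I from Finset.mem_product.2 ⟨hre, him⟩)) ?_
    rw [mem_ball, Complex.dist_eq]
    refine (Complex.norm_le_abs_re_add_abs_im _).trans_lt ?_
    have := Int.sub_floor_div_mul_lt x.re hh
    have := Int.sub_floor_div_mul_lt x.im hh
    simp only [Complex.sub_re, Complex.sub_im]
    rw [abs_of_nonneg (Int.sub_floor_div_mul_nonneg x.re hh),
      abs_of_nonneg (Int.sub_floor_div_mul_nonneg x.im hh)]
    linarith

lemma ediam_ball_le_ofReal {X : Type*} [PseudoMetricSpace X] (x : X) (r : ℝ) :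
    ediam (ball x r) ≤ ENNReal.ofReal (2 * r) := by
  rw [← eball_ofReal, ENNReal.ofReal_mul zero_le_two, ENNReal.ofReal_ofNat]
  exact ediam_eball_le

theorem hausdorffMeasure_inter_le_liminf_sum_indicator_thickening {X : Type*} [MetricSpace X]
    [MeasurableSpace X] [BorelSpace X] {d : ℝ} (hd : 0 < d) (S K : Set X) {r : ℕ → ℝ}
    (hr : Tendsto r atTop (𝓝 0)) (G : ℕ → Finset X) (hG : ∀ n, K ⊆ ⋃ z ∈ G n, ball z (r n)) :
    μH[d] (S ∩ K) ≤ liminf (fun n => ∑ z ∈ G n,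
      (thickening (r n) S).indicator (fun _ => ENNReal.ofReal (2 * r n) ^ d) z) atTop := by
  classical
  let t : ∀ n, G n → Set X := fun n z => if ↑z ∈ thickening (r n) S then ball z (r n) else ∅
  have ht_diam : ∀ n z, ediam (t n z) ≤ ENNReal.ofReal (2 * r n) := by
    intro n z
    by_cases hz : ↑z ∈ thickening (r n) S
    · simpa [t, hz] using ediam_ball_le_ofReal (z : X) (r n)
    · simp [t, hz]
  have ht_cover : ∀ n, S ∩ K ⊆ ⋃ z, t n z := by
    rintro n x ⟨hxS, hxK⟩
    obtain ⟨z, hzG, hxz⟩ := mem_iUnion₂.1 (hG n hxK)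
    have hz : z ∈ thickening (r n) S := mem_thickening_iff.2 ⟨x, hxS, mem_ball'.1 hxz⟩
    exact mem_iUnion.2 ⟨⟨z, hzG⟩, by simpa [t, hz] using hxz⟩
  have hr' : Tendsto (fun n => ENNReal.ofReal (2 * r n)) atTop (𝓝 0) := by
    simpa using ENNReal.tendsto_ofReal (hr.const_mul 2)
  refine (Measure.hausdorffMeasure_le_liminf_sum d _ _ hr' t (Eventually.of_forall ht_diam)
    (Eventually.of_forall ht_cover)).trans (liminf_le_liminf (Eventually.of_forall fun n => ?_))
  rw [← Finset.sum_coe_sort (G n)]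
  refine Finset.sum_le_sum fun z _ => ?_
  by_cases hz : ↑z ∈ thickening (r n) S
  · simpa [t, hz] using ENNReal.rpow_le_rpow (ediam_ball_le_ofReal (z : X) (r n)) hd.le
  · simp [t, hz, ENNReal.zero_rpow_of_pos hd]

theorem ae_tendsto_sum_indicator_of_tsum_ne_top {Ω ι : Type*} [MeasurableSpace Ω]
    (P : Measure Ω) (A : ℕ → ι → Set Ω) (G : ℕ → Finset ι) (w : ℕ → ℝ≥0∞)
    (h : ∑' n, ∑ i ∈ G n, w n * P (A n i) ≠ ∞) :
    ∀ᵐ ω ∂P, Tendsto (fun n => ∑ i ∈ G n, (A n i).indicator (fun _ => w n) ω) atTop (𝓝 0) := by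
  -- `A n i` need not be measurable, so we integrate over measurable hulls instead.
  set f : ℕ → Ω → ℝ≥0∞ := fun n ω =>
    ∑ i ∈ G n, (toMeasurable P (A n i)).indicator (fun _ => w n) ω
  have hf_meas : ∀ n, Measurable (f n) := fun n =>
    Finset.measurable_sum _ fun i _ => measurable_const.indicator (measurableSet_toMeasurable _ _)
  have hf_int : ∀ n, ∫⁻ ω, f n ω ∂P = ∑ i ∈ G n, w n * P (A n i) := by
    intro n
    rw [lintegral_finsetSum _ fun i _ =>
      measurable_const.indicator (measurableSet_toMeasurable _ _)]
    refine Finset.sum_congr rfl fun i _ => ?_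
    rw [lintegral_indicator_const (measurableSet_toMeasurable _ _), measure_toMeasurable]
  have hf_sum : ∀ᵐ ω ∂P, ∑' n, f n ω < ∞ := by
    refine ae_lt_top (Measurable.tsum hf_meas) ?_
    rwa [lintegral_tsum fun n => (hf_meas n).aemeasurable, tsum_congr hf_int]
  filter_upwards [hf_sum] with ω hω
  refine ENNReal.tendsto_atTop_zero_of_tsum_ne_top (ne_top_of_le_ne_top hω.ne ?_)
  exact ENNReal.tsum_le_tsum fun n => Finset.sum_le_sum fun i _ =>
    indicator_le_indicator_of_subset (subset_toMeasurable _ _) (fun _ => zero_le) ω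

lemma grid_count_mul_rpow_le {N R r ε₀ C d s : ℝ} (hN : N ≤ (4 * R / r + 3) ^ 2) (hR : 0 ≤ R)
    (hr : 0 < r) (hrε : r ≤ ε₀) (hC : 0 ≤ C) :
    N * (2 * r) ^ d * (C * r ^ s) ≤ (4 * R + 3 * ε₀) ^ 2 * 2 ^ d * C * r ^ (d + s - 2) := by
  have hbase : 4 * R / r + 3 ≤ (4 * R + 3 * ε₀) / r := by
    rw [add_div, mul_div_assoc 3]
    gcongr
    exact le_mul_of_one_le_right zero_le_three ((one_le_div hr).2 hrε)
  have hpow : r ^ (d + s - 2) = r ^ d * r ^ s / r ^ 2 := by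
    rw [Real.rpow_sub hr, Real.rpow_add hr, Real.rpow_two]
  calc N * (2 * r) ^ d * (C * r ^ s)
      ≤ ((4 * R + 3 * ε₀) / r) ^ 2 * (2 * r) ^ d * (C * r ^ s) := by
        gcongr
        exact hN.trans (pow_le_pow_left₀ (by positivity) hbase 2)
    _ = _ := by
        rw [hpow, Real.mul_rpow zero_le_two hr.le]
        field_simp

lemma summable_mul_geometric_rpow {a η : ℝ} (ha : 0 ≤ a) (hη : 0 < η) :
    Summable fun n : ℕ => (a * (1 / 2) ^ n) ^ η := by
  have h : ∀ n : ℕ, (a * (1 / 2) ^ n) ^ η = a ^ η * ((1 / 2 : ℝ) ^ η) ^ n := fun n => by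
    rw [Real.mul_rpow ha (by positivity), Real.rpow_pow_comm (by norm_num)]
  simp_rw [h]
  exact (summable_geometric_of_lt_one (by positivity)
    (Real.rpow_lt_one (by norm_num) (by norm_num) hη)).mul_left _

theorem ae_hausdorffMeasure_inter_closedBall_eq_zero {Ω : Type*} [MeasurableSpace Ω]
    (P : Measure Ω) (H : Ω → Set ℂ) {s ε₀ : ℝ} {C : ℝ≥0} (hε₀ : 0 < ε₀)
    (hone : ∀ z : ℂ, ∀ ε : ℝ, 0 < ε → ε < ε₀ →
      P {ω | z ∈ thickening ε (H ω)} ≤ ENNReal.ofReal (C * ε ^ s))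
    {d : ℝ} (hd : 0 < d) (hsd : 2 - s < d) {R : ℝ} (hR : 0 ≤ R) :
    ∀ᵐ ω ∂P, μH[d] (H ω ∩ closedBall 0 R) = 0 := by
  set r : ℕ → ℝ := fun n => ε₀ / 2 * (1 / 2) ^ n
  have hr_pos : ∀ n, 0 < r n := fun n => by positivity
  have hr_lt : ∀ n, r n < ε₀ := fun n =>
    (mul_le_of_le_one_right (by positivity) (pow_le_one₀ (by norm_num) (by norm_num))).trans_lt
      (half_lt_self hε₀)
  have hr : Tendsto r atTop (𝓝 0) := by
    simpa only [mul_zero] using (tendsto_pow_atTop_nhds_zero_of_lt_one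
      (r := (1 / 2 : ℝ)) (by norm_num) (by norm_num)).const_mul (ε₀ / 2)
  choose G hG_card hG_cover using fun n =>
    exists_finset_closedBall_subset_biUnion_ball hR (hr_pos n)
  set K := (4 * R + 3 * ε₀) ^ 2 * 2 ^ d * C
  have hterm : ∀ n, ∑ z ∈ G n, ENNReal.ofReal (2 * r n) ^ d *
      P {ω | z ∈ thickening (r n) (H ω)} ≤ ENNReal.ofReal (K * r n ^ (d + s - 2)) := by
    intro n
    calc _ ≤ ∑ z ∈ G n, ENNReal.ofReal (2 * r n) ^ d * ENNReal.ofReal (C * r n ^ s) :=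
          Finset.sum_le_sum fun z _ => by gcongr; exact hone z _ (hr_pos n) (hr_lt n)
      _ = ENNReal.ofReal ((G n).card * (2 * r n) ^ d * (C * r n ^ s)) := by
          rw [Finset.sum_const, nsmul_eq_mul, ENNReal.ofReal_rpow_of_pos (by linarith [hr_pos n]),
            ← ENNReal.ofReal_mul (by positivity), ← ENNReal.ofReal_natCast,
            ← ENNReal.ofReal_mul (by positivity), mul_assoc]
      _ ≤ _ := ENNReal.ofReal_le_ofReal
          (grid_count_mul_rpow_le (hG_card n) hR (hr_pos n) (hr_lt n).le C.2)
  have hsummable : Summable fun n => K * r n ^ (d + s - 2) :=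
    (summable_mul_geometric_rpow (by positivity) (by linarith)).mul_left K
  have hsum : ∑' n, ∑ z ∈ G n, ENNReal.ofReal (2 * r n) ^ d *
      P {ω | z ∈ thickening (r n) (H ω)} ≠ ∞ := by
    refine ne_top_of_le_ne_top ?_ (ENNReal.tsum_le_tsum hterm)
    rw [← ENNReal.ofReal_tsum_of_nonneg (fun n => by positivity) hsummable]
    exact ENNReal.ofReal_ne_top
  filter_upwards [ae_tendsto_sum_indicator_of_tsum_ne_top P
    (fun n z => {ω | z ∈ thickening (r n) (H ω)}) G _ hsum] with ω hω
  exact le_antisymm ((hausdorffMeasure_inter_le_liminf_sum_indicator_thickening hd (H ω) _ hr G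
    hG_cover).trans_eq hω.liminf_eq) zero_le

theorem dimH_le_ofReal_of_hausdorffMeasure_inter_closedBall_eq_zero {X : Type*} [MetricSpace X]
    [MeasurableSpace X] [BorelSpace X] {S : Set X} (x₀ : X) {a : ℝ}
    (h : ∀ q : ℚ, 0 < (q : ℝ) → a < q → ∀ R : ℕ, μH[q] (S ∩ closedBall x₀ R) = 0) :
    dimH S ≤ ENNReal.ofReal a := by
  rw [← inter_univ S, ← iUnion_closedBall_nat x₀, inter_iUnion, dimH_iUnion]
  refine iSup_le fun R => dimH_le fun d hd => ?_
  by_contra! had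
  rw [← ENNReal.ofReal_coe_nnreal, ENNReal.ofReal_lt_ofReal_iff'] at had
  obtain ⟨q, hq, hqd⟩ := exists_rat_btwn (max_lt had.1 had.2)
  have hmono := Measure.hausdorffMeasure_mono hqd.le (S ∩ closedBall x₀ R)
  rw [hd, h q ((le_max_right _ _).trans_lt hq) ((le_max_left _ _).trans_lt hq) R] at hmono
  exact ENNReal.top_ne_zero (nonpos_iff_eq_zero.1 hmono)

theorem dimH_upper_bound_general {Ω : Type*} [MeasurableSpace Ω]
    (P : Measure Ω) [IsProbabilityMeasure P] (H : Ω → Set ℂ)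
    (s : ℝ)
    (C₁ C₂ ε₀ : ℝ) (hε₀ : 0 < ε₀)
    (hone : ∀ z : ℂ, ∀ ε : ℝ, 0 < ε → ε < ε₀ →
      C₁ * ε ^ s ≤ (P {ω | z ∈ thickening ε (H ω)}).toReal ∧
      (P {ω | z ∈ thickening ε (H ω)}).toReal ≤ C₂ * ε ^ s) :
    ∀ᵐ ω ∂P, dimH (H ω) ≤ ENNReal.ofReal (2 - s) := by
  have hupper : ∀ z : ℂ, ∀ ε : ℝ, 0 < ε → ε < ε₀ →
      P {ω | z ∈ thickening ε (H ω)} ≤ ENNReal.ofReal (C₂.toNNReal * ε ^ s) := by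
    intro z ε hε hεε₀
    rw [← ENNReal.ofReal_toReal (measure_ne_top P _)]
    refine ENNReal.ofReal_le_ofReal ((hone z ε hε hεε₀).2.trans ?_)
    gcongr
    exact C₂.le_coe_toNNReal
  have hnull : ∀ᵐ ω ∂P, ∀ q ∈ {q : ℚ | 0 < (q : ℝ) ∧ 2 - s < q}, ∀ R : ℕ,
      μH[q] (H ω ∩ closedBall 0 R) = 0 :=
    (ae_ball_iff (to_countable _)).2 fun q hq => ae_all_iff.2 fun R =>
      ae_hausdorffMeasure_inter_closedBall_eq_zero P H hε₀ hupper hq.1 hq.2 R.cast_nonneg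
  filter_upwards [hnull] with ω hω
  exact dimH_le_ofReal_of_hausdorffMeasure_inter_closedBall_eq_zero 0
    fun q hq0 hqs => hω q ⟨hq0, hqs⟩

/-- Upper-bound half of the dimension proposition: if the probability that a point lies
in the `ε`-neighborhood `H_ε` of a random set `H ⊆ ℂ` is comparable to `ε^s`, and the
two-point probabilities satisfy
`P(w,z ∈ H_ε) ≤ c·min(ε^s, ε^{2s}/|w−z|^s)`, then `dim_H(H) ≤ 2 − s` almost surely. -/
theorem dimH_upper_bound {Ω : Type*} [MeasurableSpace Ω]
    (P : Measure Ω) [IsProbabilityMeasure P] (H : Ω → Set ℂ)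
    (s : ℝ) (hs0 : 0 ≤ s) (hs2 : s ≤ 2)
    (C₁ C₂ c ε₀ : ℝ) (hC₁ : 0 < C₁) (hC₂ : 0 < C₂) (hc : 0 < c) (hε₀ : 0 < ε₀)
    (hone : ∀ z : ℂ, ∀ ε : ℝ, 0 < ε → ε < ε₀ →
      C₁ * ε ^ s ≤ (P {ω | z ∈ thickening ε (H ω)}).toReal ∧
      (P {ω | z ∈ thickening ε (H ω)}).toReal ≤ C₂ * ε ^ s)
    (htwo : ∀ w z : ℂ, w ≠ z → ∀ ε : ℝ, 0 < ε → ε < ε₀ →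
      (P {ω | w ∈ thickening ε (H ω) ∧ z ∈ thickening ε (H ω)}).toReal ≤
        min (c * ε ^ s) (c * ε ^ (2 * s) / dist w z ^ s)) :
    ∀ᵐ ω ∂P, dimH (H ω) ≤ ENNReal.ofReal (2 - s) :=
  dimH_upper_bound_general P H s C₁ C₂ ε₀ hε₀ hone
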